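/- Let m, N ∈ ℕ, let M₋, M₊ be m × m complex matrices with M₋ invertible, let Δt ∈ ℝ, and let f⁰,…,f^{N−1} ∈ ℂᵐ. Let y⁰,…,y^N ∈ ℂᵐ satisfy y⁰ = 0 and M₋ y^{n+1} = M₊ yⁿ + Δt fⁿ for 0 ≤ n ≤ N−1, and let φ⁰,…,φ^N ∈ ℂᵐ satisfy the adjoint recursion M₋* φⁿ = M₊* φ^{n+1} for 0 ≤ n ≤ N−1, where M* denotes the conjugate transpose. Then ⟨φ^N, M₋ y^N⟩ = Δt · Σ_{n=0}^{N−1} ⟨φ^{n+1}, fⁿ⟩, where ⟨·,·⟩ is the standard complex inner product on ℂᵐ. -/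

import Mathlib

/-!
Pairing the forward scheme with the adjoint one, the quantity `⟨φⁿ, M₋ yⁿ⟩` grows at each step by
exactly `Δt ⟨φⁿ⁺¹, fⁿ⟩`: moving `M₊` across the pairing turns `⟨φⁿ⁺¹, M₊ yⁿ⟩` into
`⟨M₊* φⁿ⁺¹, yⁿ⟩ = ⟨M₋* φⁿ, yⁿ⟩ = ⟨φⁿ, M₋ yⁿ⟩`. Since `y⁰ = 0`, the sum telescopes.
-/

open Matrix Finset

theorem Finset.eq_sum_range_of_succ_eq_add {M : Type*} [AddCommMonoid M] {q d : ℕ → M} {N : ℕ}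
    (h0 : q 0 = 0) (hstep : ∀ n < N, q (n + 1) = q n + d n) :
    q N = ∑ n ∈ range N, d n := by
  induction N with
  | zero => simpa using h0
  | succ N ih =>
    rw [sum_range_succ, hstep N N.lt_succ_self, ih fun n hn => hstep n (hn.trans N.lt_succ_self)]

namespace Matrix

variable {ι R : Type*} [Fintype ι]

theorem star_dotProduct_mulVec_eq_conjTranspose [NonUnitalSemiring R] [StarRing R]
    (A : Matrix ι ι R) (u v : ι → R) :
    star u ⬝ᵥ A *ᵥ v = star (Aᴴ *ᵥ u) ⬝ᵥ v := by
  rw [dotProduct_mulVec, star_mulVec, conjTranspose_conjTranspose]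

theorem star_dotProduct_mulVec_succ_eq_add [CommSemiring R] [StarRing R]
    {Mminus Mplus : Matrix ι ι R} {c : R} {y y' g φ φ' : ι → R}
    (hfwd : Mminus *ᵥ y' = Mplus *ᵥ y + c • g) (hadj : Mminusᴴ *ᵥ φ = Mplusᴴ *ᵥ φ') :
    star φ' ⬝ᵥ Mminus *ᵥ y' = star φ ⬝ᵥ Mminus *ᵥ y + c * (star φ' ⬝ᵥ g) := by
  rw [hfwd, dotProduct_add, dotProduct_smul, smul_eq_mul,
    star_dotProduct_mulVec_eq_conjTranspose, ← hadj, ← star_dotProduct_mulVec_eq_conjTranspose]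

end Matrix

theorem discrete_adjoint_identity_general
    (m N : ℕ) (Mminus Mplus : Matrix (Fin m) (Fin m) ℂ)
    (Δt : ℝ) (f y φ : ℕ → (Fin m → ℂ))
    (hy0 : y 0 = 0)
    (hfwd : ∀ n < N, Mminus.mulVec (y (n + 1)) = Mplus.mulVec (y n) + (Δt : ℂ) • f n)
    (hadj : ∀ n < N, Mminusᴴ.mulVec (φ n) = Mplusᴴ.mulVec (φ (n + 1))) :
    star (φ N) ⬝ᵥ Mminus.mulVec (y N)
      = (Δt : ℂ) * ∑ n ∈ Finset.range N, star (φ (n + 1)) ⬝ᵥ f n := by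
  rw [mul_sum]
  refine eq_sum_range_of_succ_eq_add (q := fun n => star (φ n) ⬝ᵥ Mminus *ᵥ y n)
    (by simp [hy0]) fun n hn => ?_
  exact star_dotProduct_mulVec_succ_eq_add (hfwd n hn) (hadj n hn)

/-- Discrete summation-by-parts identity for the Crank–Nicolson forward scheme
`Mminus y^{n+1} = Mplus yⁿ + Δt fⁿ` (with `y⁰ = 0`) and the adjoint recursion
`Mminus* φⁿ = Mplus* φ^{n+1}`:
`⟨φ^N, Mminus y^N⟩ = Δt · Σ_{n=0}^{N−1} ⟨φ^{n+1}, fⁿ⟩`. -/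
theorem discrete_adjoint_identity
    (m N : ℕ) (Mminus Mplus : Matrix (Fin m) (Fin m) ℂ) (hM : IsUnit Mminus)
    (Δt : ℝ) (f y φ : ℕ → (Fin m → ℂ))
    (hy0 : y 0 = 0)
    (hfwd : ∀ n < N, Mminus.mulVec (y (n + 1)) = Mplus.mulVec (y n) + (Δt : ℂ) • f n)
    (hadj : ∀ n < N, Mminusᴴ.mulVec (φ n) = Mplusᴴ.mulVec (φ (n + 1))) :
    star (φ N) ⬝ᵥ Mminus.mulVec (y N)
      = (Δt : ℂ) * ∑ n ∈ Finset.range N, star (φ (n + 1)) ⬝ᵥ f n :=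
  discrete_adjoint_identity_general m N Mminus Mplus Δt f y φ hy0 hfwd hadj
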